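/- Let G(p) be an undirected formation in ℝᵈ, i.e., the edge set E is symmetric ((i,j) ∈ E ↔ (j,i) ∈ E). Then the bearing Laplacian L_B is symmetric (⟨x, L_B y⟩ = ⟨L_B x, y⟩ for all x, y ∈ ℝ^{dn}) and positive semi-definite (⟨x, L_B x⟩ ≥ 0 for all x ∈ ℝ^{dn}), and Null(L_B) = Null(R_B). -/

import Mathlib

open scoped InnerProductSpace

/-- The orthogonal projection matrix `P_x = I − x xᵀ/‖x‖²` onto the orthogonal
complement of a nonzero vector `x ∈ ℝᵈ`, as a linear map. -/
noncomputable def projP {d : ℕ} (x : EuclideanSpace ℝ (Fin d)) :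
    EuclideanSpace ℝ (Fin d) →ₗ[ℝ] EuclideanSpace ℝ (Fin d) :=
  LinearMap.id - (‖x‖ ^ 2)⁻¹ • ((innerSL ℝ x).toLinearMap.smulRight x)

/-- The linear map sending a configuration `x = (x_1, …, x_n)` to `x_j − x_i`. -/
noncomputable def relpos {d n : ℕ} (i j : Fin n) :
    (Fin n → EuclideanSpace ℝ (Fin d)) →ₗ[ℝ] EuclideanSpace ℝ (Fin d) :=
  LinearMap.proj (R := ℝ) (φ := fun _ : Fin n => EuclideanSpace ℝ (Fin d)) j -
    LinearMap.proj (R := ℝ) (φ := fun _ : Fin n => EuclideanSpace ℝ (Fin d)) i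

/-- The bearing `g_ij = (p_j − p_i)/‖p_j − p_i‖` of edge `(i, j)`. -/
noncomputable def bearing {d n : ℕ} (p : Fin n → EuclideanSpace ℝ (Fin d))
    (i j : Fin n) : EuclideanSpace ℝ (Fin d) :=
  ‖p j - p i‖⁻¹ • (p j - p i)

/-- The bearing rigidity matrix `R_B` of the formation `G(p)`: the linear map
`ℝ^{dn} → ℝ^{d|E|}` whose component for edge `(i,j) ∈ E` is
`(1/‖e_ij‖) P_{g_ij} (x_j − x_i)`. -/
noncomputable def RB {d n : ℕ} (E : Finset (Fin n × Fin n))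
    (p : Fin n → EuclideanSpace ℝ (Fin d)) :
    (Fin n → EuclideanSpace ℝ (Fin d)) →ₗ[ℝ] (↥E → EuclideanSpace ℝ (Fin d)) :=
  LinearMap.pi fun e =>
    ‖p e.1.2 - p e.1.1‖⁻¹ • (projP (bearing p e.1.1 e.1.2) ∘ₗ relpos e.1.1 e.1.2)

/-- The bearing Laplacian `L_B` of the formation `G(p)`: the linear map
`ℝ^{dn} → ℝ^{dn}` whose `i`-th `ℝᵈ`-block is `∑_{j : (i,j) ∈ E} P_{g_ij}(x_i − x_j)`. -/
noncomputable def LB {d n : ℕ} (E : Finset (Fin n × Fin n))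
    (p : Fin n → EuclideanSpace ℝ (Fin d)) :
    (Fin n → EuclideanSpace ℝ (Fin d)) →ₗ[ℝ] (Fin n → EuclideanSpace ℝ (Fin d)) :=
  LinearMap.pi fun i =>
    ∑ j ∈ Finset.univ.filter (fun j => (i, j) ∈ E),
      (projP (bearing p i j) ∘ₗ relpos j i)

/-- The subspace `span{𝟏 ⊗ I_d, p} = {c • p + (v, …, v) : c ∈ ℝ, v ∈ ℝᵈ}` of
translations and scalings of the configuration `p`. -/
def transScale {d n : ℕ} (p : Fin n → EuclideanSpace ℝ (Fin d)) :
    Set (Fin n → EuclideanSpace ℝ (Fin d)) :=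
  {x | ∃ (c : ℝ) (v : EuclideanSpace ℝ (Fin d)), x = c • p + fun _ => v}

/- For symmetric `E`, pairing `x` with `L_B y` and symmetrising over the two
orientations of each edge gives `⟨x, L_B y⟩ = ½ ∑_{(i,j) ∈ E} ⟨x_i − x_j, P_{g_ij}(y_i − y_j)⟩`,
using `g_ji = −g_ij` and `P_{−g} = P_g`. Symmetry of `L_B` follows from self-adjointness of the
projections, and, since they are idempotent, `⟨x, L_B x⟩ = ½ ∑ ‖P_{g_ij}(x_i − x_j)‖² ≥ 0`.
Hence `L_B x = 0` iff every `P_{g_ij}(x_i − x_j)` vanishes, which is also the condition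
`R_B x = 0` because the edge weights `1/‖e_ij‖` are nonzero. -/

section Projection

variable {d : ℕ}

lemma projP_apply (g v : EuclideanSpace ℝ (Fin d)) :
    projP g v = v - ((‖g‖ ^ 2)⁻¹ * ⟪g, v⟫_ℝ) • g := by
  simp [projP, smul_smul]

lemma projP_isSymmetric (g : EuclideanSpace ℝ (Fin d)) : (projP g).IsSymmetric := by
  intro u v
  rw [projP_apply, projP_apply, inner_sub_right, inner_sub_left, real_inner_smul_right,
    real_inner_smul_left, real_inner_comm u g]
  ring

lemma projP_neg (g : EuclideanSpace ℝ (Fin d)) : projP (-g) = projP g := by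
  ext1 v
  rw [projP_apply, projP_apply, norm_neg, inner_neg_left]
  module

lemma inner_projP_eq_zero (g v : EuclideanSpace ℝ (Fin d)) : ⟪g, projP g v⟫_ℝ = 0 := by
  rcases eq_or_ne g 0 with rfl | hg
  · simp
  rw [projP_apply, inner_sub_right, real_inner_smul_right, real_inner_self_eq_norm_sq]
  field_simp
  ring

lemma projP_projP (g v : EuclideanSpace ℝ (Fin d)) : projP g (projP g v) = projP g v := by
  rw [projP_apply (v := projP g v), inner_projP_eq_zero]
  simp

lemma inner_projP_self (g v : EuclideanSpace ℝ (Fin d)) :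
    ⟪v, projP g v⟫_ℝ = ‖projP g v‖ ^ 2 := by
  rw [← projP_projP g v, ← projP_isSymmetric, projP_projP, real_inner_self_eq_norm_sq]

end Projection

section Formation

variable {d n : ℕ}

lemma bearing_swap (p : Fin n → EuclideanSpace ℝ (Fin d)) (i j : Fin n) :
    bearing p j i = -bearing p i j := by
  rw [bearing, bearing, norm_sub_rev, ← neg_sub (p j), smul_neg]

lemma sum_sum_filter_mem {M : Type*} [AddCommMonoid M] (E : Finset (Fin n × Fin n))
    (f : Fin n → Fin n → M) :
    ∑ i, ∑ j ∈ Finset.univ.filter (fun j => (i, j) ∈ E), f i j = ∑ e ∈ E, f e.1 e.2 := by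
  simp_rw [Finset.sum_filter]
  rw [← Finset.univ_inter E, ← Finset.sum_ite_mem, Fintype.sum_prod_type]
  simp

lemma sum_swap_of_symm {M : Type*} [AddCommMonoid M] {E : Finset (Fin n × Fin n)}
    (hsym : ∀ i j : Fin n, (i, j) ∈ E ↔ (j, i) ∈ E) (f : Fin n × Fin n → M) :
    ∑ e ∈ E, f e.swap = ∑ e ∈ E, f e :=
  Finset.sum_nbij' Prod.swap Prod.swap (fun e he => (hsym e.1 e.2).mp he)
    (fun e he => (hsym e.1 e.2).mp he) (fun _ _ => rfl) (fun _ _ => rfl) (fun _ _ => rfl)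

lemma LB_apply (E : Finset (Fin n × Fin n)) (p x : Fin n → EuclideanSpace ℝ (Fin d))
    (i : Fin n) :
    LB E p x i = ∑ j ∈ Finset.univ.filter (fun j => (i, j) ∈ E),
      projP (bearing p i j) (x i - x j) := by
  simp [LB, relpos]

lemma RB_apply (E : Finset (Fin n × Fin n)) (p x : Fin n → EuclideanSpace ℝ (Fin d))
    (e : E) :
    RB E p x e = ‖p e.1.2 - p e.1.1‖⁻¹ •
      projP (bearing p e.1.1 e.1.2) (x e.1.2 - x e.1.1) := by
  simp [RB, relpos]

noncomputable def edgeProj (p x : Fin n → EuclideanSpace ℝ (Fin d)) (e : Fin n × Fin n) :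
    EuclideanSpace ℝ (Fin d) :=
  projP (bearing p e.1 e.2) (x e.1 - x e.2)

lemma edgeProj_swap (p x : Fin n → EuclideanSpace ℝ (Fin d)) (e : Fin n × Fin n) :
    edgeProj p x e.swap = -edgeProj p x e := by
  rw [edgeProj, edgeProj, Prod.fst_swap, Prod.snd_swap, bearing_swap, projP_neg,
    ← neg_sub, map_neg]

lemma sum_inner_LB {E : Finset (Fin n × Fin n)} (hsym : ∀ i j : Fin n, (i, j) ∈ E ↔ (j, i) ∈ E)
    (p x y : Fin n → EuclideanSpace ℝ (Fin d)) :
    ∑ i, ⟪x i, LB E p y i⟫_ℝ = (1 / 2) * ∑ e ∈ E, ⟪x e.1 - x e.2, edgeProj p y e⟫_ℝ := by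
  have hfst : ∑ i, ⟪x i, LB E p y i⟫_ℝ = ∑ e ∈ E, ⟪x e.1, edgeProj p y e⟫_ℝ := by
    simp_rw [LB_apply, inner_sum]
    exact sum_sum_filter_mem E fun i j => ⟪x i, edgeProj p y (i, j)⟫_ℝ
  have hsnd : ∑ i, ⟪x i, LB E p y i⟫_ℝ = -∑ e ∈ E, ⟪x e.2, edgeProj p y e⟫_ℝ := by
    rw [hfst, ← sum_swap_of_symm hsym, ← Finset.sum_neg_distrib]
    simp_rw [edgeProj_swap, inner_neg_right, Prod.fst_swap]
  rw [Finset.sum_congr rfl fun e _ => inner_sub_left (x e.1) (x e.2) (edgeProj p y e),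
    Finset.sum_sub_distrib]
  linarith

lemma sum_inner_LB_comm {E : Finset (Fin n × Fin n)}
    (hsym : ∀ i j : Fin n, (i, j) ∈ E ↔ (j, i) ∈ E) (p x y : Fin n → EuclideanSpace ℝ (Fin d)) :
    ∑ i, ⟪x i, LB E p y i⟫_ℝ = ∑ i, ⟪LB E p x i, y i⟫_ℝ := by
  rw [← Finset.sum_congr rfl fun i _ => real_inner_comm (LB E p x i) (y i), sum_inner_LB hsym,
    sum_inner_LB hsym]
  congr 1
  refine Finset.sum_congr rfl fun e _ => ?_
  rw [edgeProj, edgeProj, ← projP_isSymmetric, real_inner_comm]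

lemma sum_inner_LB_self {E : Finset (Fin n × Fin n)}
    (hsym : ∀ i j : Fin n, (i, j) ∈ E ↔ (j, i) ∈ E) (p x : Fin n → EuclideanSpace ℝ (Fin d)) :
    ∑ i, ⟪x i, LB E p x i⟫_ℝ = (1 / 2) * ∑ e ∈ E, ‖edgeProj p x e‖ ^ 2 := by
  simp_rw [sum_inner_LB hsym, edgeProj, inner_projP_self]

lemma LB_eq_zero_iff {E : Finset (Fin n × Fin n)}
    (hsym : ∀ i j : Fin n, (i, j) ∈ E ↔ (j, i) ∈ E) (p x : Fin n → EuclideanSpace ℝ (Fin d)) :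
    LB E p x = 0 ↔ ∀ e ∈ E, edgeProj p x e = 0 := by
  constructor
  · intro h e he
    have hsq : ∑ e ∈ E, ‖edgeProj p x e‖ ^ 2 = 0 := by
      simpa [h] using (sum_inner_LB_self hsym p x).symm
    simpa using (Finset.sum_eq_zero_iff_of_nonneg fun e _ => sq_nonneg _).mp hsq e he
  · intro h
    funext i
    rw [LB_apply]
    exact Finset.sum_eq_zero fun j hj => h (i, j) (Finset.mem_filter.mp hj).2

lemma RB_eq_zero_iff {E : Finset (Fin n × Fin n)} {p : Fin n → EuclideanSpace ℝ (Fin d)}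
    (hsep : ∀ e ∈ E, p e.1 ≠ p e.2) (x : Fin n → EuclideanSpace ℝ (Fin d)) :
    RB E p x = 0 ↔ ∀ e ∈ E, edgeProj p x e = 0 := by
  have hedge : ∀ e : E, RB E p x e = -‖p e.1.2 - p e.1.1‖⁻¹ • edgeProj p x e := by
    intro e
    rw [RB_apply, edgeProj, ← neg_sub (x e.1.1), map_neg, smul_neg, neg_smul]
  have hweight : ∀ e ∈ E, -‖p e.2 - p e.1‖⁻¹ ≠ 0 := fun e he => by
    simpa [sub_eq_zero] using (hsep e he).symm
  simp only [funext_iff, Pi.zero_apply, hedge, Subtype.forall]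
  exact forall₂_congr fun e he => smul_eq_zero_iff_right (hweight e he)

end Formation

theorem stmt8_general {d n : ℕ}
    (E : Finset (Fin n × Fin n))
    (hsym : ∀ i j : Fin n, (i, j) ∈ E ↔ (j, i) ∈ E)
    (p : Fin n → EuclideanSpace ℝ (Fin d))
    (hsep : ∀ e ∈ E, p e.1 ≠ p e.2) :
    (∀ x y : Fin n → EuclideanSpace ℝ (Fin d),
        ∑ i, (inner ℝ (x i) (LB E p y i) : ℝ) = ∑ i, (inner ℝ (LB E p x i) (y i) : ℝ)) ∧
      (∀ x : Fin n → EuclideanSpace ℝ (Fin d),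
        0 ≤ ∑ i, (inner ℝ (x i) (LB E p x i) : ℝ)) ∧
      LinearMap.ker (LB E p) = LinearMap.ker (RB E p) := by
  refine ⟨sum_inner_LB_comm hsym p, fun x => ?_, ?_⟩
  · rw [sum_inner_LB_self hsym]
    positivity
  · ext x
    rw [LinearMap.mem_ker, LinearMap.mem_ker, LB_eq_zero_iff hsym, RB_eq_zero_iff hsep]

/-- For an undirected formation (`E` symmetric), the bearing Laplacian `L_B` is
symmetric and positive semi-definite with respect to the standard inner product on
`ℝ^{dn}`, and `Null(L_B) = Null(R_B)`. -/
theorem stmt8 {d n : ℕ} (hd : 2 ≤ d) (hn : 2 ≤ n)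
    (E : Finset (Fin n × Fin n))
    (hsym : ∀ i j : Fin n, (i, j) ∈ E ↔ (j, i) ∈ E)
    (p : Fin n → EuclideanSpace ℝ (Fin d))
    (hloop : ∀ e ∈ E, e.1 ≠ e.2) (hsep : ∀ e ∈ E, p e.1 ≠ p e.2) :
    (∀ x y : Fin n → EuclideanSpace ℝ (Fin d),
        ∑ i, (inner ℝ (x i) (LB E p y i) : ℝ) = ∑ i, (inner ℝ (LB E p x i) (y i) : ℝ)) ∧
      (∀ x : Fin n → EuclideanSpace ℝ (Fin d),
        0 ≤ ∑ i, (inner ℝ (x i) (LB E p x i) : ℝ)) ∧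
      LinearMap.ker (LB E p) = LinearMap.ker (RB E p) :=
  stmt8_general E hsym p hsep
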